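/- arXiv:1204.0411 — 2 statements merged into one kernel-verified Lean document; each statement's English description precedes it below -/
import Mathlib

section
/- Every 2-loop contribution to the loop expansion of the Chern–Simons partition function on the noncommutative 3-torus vanishes. Precisely: fix a real skew-symmetric 3×3 matrix Θ and indices a,b,c ∈ {1,2,3}; for q,r ∈ ℤ³ with q ≠ 0, r ≠ 0 and q ≠ r define S(q,r) := sin²(½⟨q,Θr⟩) · q_a·(q_b − r_b)·r_c / (‖q‖²·‖q−r‖²·‖r‖²). Then S(−q,−r) = −S(q,r) for all such pairs, and consequently for every finite set T of such pairs (q,r) that is invariant under the involution (q,r) ↦ (−q,−r), one has Σ_{(q,r)∈T} S(q,r) = 0. In particular the coefficient of k^{−1} in the loop expansion series of the partition function vanishes. -/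
open scoped BigOperators

/-- The pairing ⟨k, Θ q⟩ = Σ_{i,j} k_i Θ_{ij} q_j. -/
def thetaPairing (Θ : Matrix (Fin 3) (Fin 3) ℝ) (k q : Fin 3 → ℤ) : ℝ :=
  ∑ i : Fin 3, ∑ j : Fin 3, (k i : ℝ) * Θ i j * (q j : ℝ)

/-- Squared euclidean norm ‖q‖² of a lattice point. -/
def latticeNormSq (q : Fin 3 → ℤ) : ℝ :=
  ∑ i : Fin 3, ((q i : ℝ)) ^ 2

/-- The 2-loop summand
`S(q,r) = sin²(½⟨q,Θr⟩) · q_a (q_b − r_b) r_c / (‖q‖² ‖q−r‖² ‖r‖²)`. -/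
noncomputable def twoLoopSummand (Θ : Matrix (Fin 3) (Fin 3) ℝ) (a b c : Fin 3)
    (q r : Fin 3 → ℤ) : ℝ :=
  (Real.sin ((1 / 2) * thetaPairing Θ q r)) ^ 2 *
      (q a : ℝ) * ((q b : ℝ) - (r b : ℝ)) * (r c : ℝ) /
    (latticeNormSq q * latticeNormSq (q - r) * latticeNormSq r)

/-!
The pairing ⟨q, Θr⟩ is bilinear and the norms are even, so under (q, r) ↦ (−q, −r) only the
cubic numerator q_a (q_b − r_b) r_c changes, by a sign. Summing an odd function over a
negation-invariant finite set gives zero, since reindexing by negation shows the sum equals its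
own negative.
-/

theorem Finset.sum_eq_zero_of_neg_mem_of_odd {α M : Type*} [InvolutiveNeg α] [AddCommGroup M]
    [IsAddTorsionFree M] {s : Finset α} {f : α → M} (hs : ∀ x ∈ s, -x ∈ s)
    (hf : ∀ x ∈ s, f (-x) = -f x) : ∑ x ∈ s, f x = 0 := by
  have hreindex : ∑ x ∈ s, f (-x) = ∑ x ∈ s, f x :=
    sum_nbij' (- ·) (- ·) hs hs (by simp) (by simp) (by simp)
  rw [sum_congr rfl hf, sum_neg_distrib, neg_eq_iff_add_eq_zero, ← two_nsmul] at hreindex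
  exact two_nsmul_eq_zero.mp hreindex

theorem thetaPairing_neg_neg (Θ : Matrix (Fin 3) (Fin 3) ℝ) (k q : Fin 3 → ℤ) :
    thetaPairing Θ (-k) (-q) = thetaPairing Θ k q := by
  simp [thetaPairing]

theorem latticeNormSq_neg (q : Fin 3 → ℤ) : latticeNormSq (-q) = latticeNormSq q := by
  simp [latticeNormSq]

theorem twoLoopSummand_neg_neg (Θ : Matrix (Fin 3) (Fin 3) ℝ) (a b c : Fin 3)
    (q r : Fin 3 → ℤ) :
    twoLoopSummand Θ a b c (-q) (-r) = -twoLoopSummand Θ a b c q r := by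
  rw [twoLoopSummand, twoLoopSummand, thetaPairing_neg_neg, ← neg_sub']
  simp only [latticeNormSq_neg, Pi.neg_apply, Int.cast_neg]
  ring

theorem two_loop_contributions_vanish_general (Θ : Matrix (Fin 3) (Fin 3) ℝ)
    (a b c : Fin 3) :
    (∀ q r : Fin 3 → ℤ, q ≠ 0 → r ≠ 0 → q ≠ r →
      twoLoopSummand Θ a b c (-q) (-r) = - twoLoopSummand Θ a b c q r) ∧
    (∀ T : Finset ((Fin 3 → ℤ) × (Fin 3 → ℤ)),
      (∀ p ∈ T, p.1 ≠ 0 ∧ p.2 ≠ 0 ∧ p.1 ≠ p.2) →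
      (∀ p ∈ T, (-p.1, -p.2) ∈ T) →
      ∑ p ∈ T, twoLoopSummand Θ a b c p.1 p.2 = 0) :=
  ⟨fun q r _ _ _ => twoLoopSummand_neg_neg Θ a b c q r, fun _ _ hT =>
    Finset.sum_eq_zero_of_neg_mem_of_odd hT fun p _ => twoLoopSummand_neg_neg Θ a b c p.1 p.2⟩

theorem two_loop_contributions_vanish (Θ : Matrix (Fin 3) (Fin 3) ℝ)
    (hΘ : Θ.transpose = -Θ) (a b c : Fin 3) :
    (∀ q r : Fin 3 → ℤ, q ≠ 0 → r ≠ 0 → q ≠ r →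
      twoLoopSummand Θ a b c (-q) (-r) = - twoLoopSummand Θ a b c q r) ∧
    (∀ T : Finset ((Fin 3 → ℤ) × (Fin 3 → ℤ)),
      (∀ p ∈ T, p.1 ≠ 0 ∧ p.2 ≠ 0 ∧ p.1 ≠ p.2) →
      (∀ p ∈ T, (-p.1, -p.2) ∈ T) →
      ∑ p ∈ T, twoLoopSummand Θ a b c p.1 p.2 = 0) :=
  two_loop_contributions_vanish_general Θ a b c
end

section
/- Let n ≥ 1 be an integer. The set of matrices Θ ∈ Mₙ(ℝ) that are not diophantine — i.e. for which there is no u ∈ ℤⁿ such that the vector Θu is diophantine — has Lebesgue measure zero in Mₙ(ℝ) ≅ ℝ^{n²}. In other words, almost every real n×n matrix is diophantine. -/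
/-!
Almost every real n×n matrix (identified with an element of ℝ^{n²}) is
diophantine: the set of non-diophantine matrices has Lebesgue measure zero.
-/

open scoped BigOperators

/-- `a ∈ ℝⁿ` is δ-diophantine if there is `c > 0` with
`|q·a − m| ≥ c·‖q‖^{−δ}` for all `q ∈ ℤⁿ \ {0}` and all `m ∈ ℤ`. -/
def IsDeltaDiophantine {n : ℕ} (δ : ℝ) (a : Fin n → ℝ) : Prop :=
  ∃ c > (0 : ℝ), ∀ q : Fin n → ℤ, q ≠ 0 → ∀ m : ℤ,
    c * (Real.sqrt (∑ i : Fin n, ((q i : ℝ)) ^ 2)) ^ (-δ) ≤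
      |(∑ i : Fin n, (q i : ℝ) * a i) - (m : ℝ)|

/-- A vector is diophantine if it is δ-diophantine for some δ > 0. -/
def IsDiophantineVector {n : ℕ} (a : Fin n → ℝ) : Prop :=
  ∃ δ > (0 : ℝ), IsDeltaDiophantine δ a

/-- A matrix Θ (viewed as an element of ℝⁿ ⊗ ℝⁿ ≅ ℝ^{n²}) is diophantine if
there is `u ∈ ℤⁿ` such that the vector `Θu` is diophantine. -/
def IsDiophantineMatrix {n : ℕ} (Θ : Fin n → Fin n → ℝ) : Prop :=
  ∃ u : Fin n → ℤ, IsDiophantineVector (fun i => ∑ j : Fin n, Θ i j * (u j : ℝ))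

/-!
Fix `δ ≥ 2N + 1` and the sup-norm ball of radius `R` in `ℝᴺ`. A vector that is not
δ-diophantine lies, for every `c > 0`, in a slab `|q·a − m| < c‖q‖₂^{-δ}` with `q ≠ 0`.
Inside the ball such a slab has volume at most `2c‖q‖₂^{-δ}(2R)^{N-1}`, and only
`O((NR + 1)‖q‖_∞)` values of `m` give a nonempty slab. Since
`‖q‖_∞^{1-δ} ≤ ∏ᵢ max(1, |qᵢ|)^{-2}`, the sum over all `q` converges, so the
non-diophantine vectors of the ball have measure `O(c)` for every `c`, hence measure zero.
For matrices take `u = e_j`: then `Θu` is the `j`-th column, and the columns of a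
Lebesgue-random matrix are Lebesgue-random vectors.
-/

open MeasureTheory Metric Filter Topology

theorem Matrix.det_updateRow_one {n R : Type*} [Fintype n] [DecidableEq n] [CommRing R]
    (i : n) (w : n → R) : ((1 : Matrix n n R).updateRow i w).det = w i := by
  have : ∑ k, w k • (1 : Matrix n n R) k = w := by
    ext j; simp [Matrix.one_apply]
  conv_lhs => rw [← this]
  simpa using Matrix.det_updateRow_sum (1 : Matrix n n R) i w

theorem abs_dotProduct_le {ι : Type*} [Fintype ι] (v w : ι → ℝ) :
    |v ⬝ᵥ w| ≤ Fintype.card ι * ‖v‖ * ‖w‖ := by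
  calc |v ⬝ᵥ w| ≤ ∑ i, |v i| * |w i| := by
        simpa only [dotProduct, abs_mul] using Finset.abs_sum_le_sum_abs (fun i ↦ v i * w i) _
    _ ≤ ∑ _i : ι, ‖v‖ * ‖w‖ := by
        gcongr with i
        · exact norm_le_pi_norm v i
        · exact norm_le_pi_norm w i
    _ = _ := by simp [mul_assoc]

theorem norm_le_sqrt_sum_sq {ι : Type*} [Fintype ι] (w : ι → ℝ) : ‖w‖ ≤ √(∑ i, w i ^ 2) :=
  (pi_norm_le_iff_of_nonneg (Real.sqrt_nonneg _)).2 fun i ↦ Real.abs_le_sqrt <|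
    Finset.single_le_sum (f := fun i ↦ w i ^ 2) (fun _ _ ↦ sq_nonneg _) (Finset.mem_univ i)

theorem ENNReal.tsum_fin_pi_prod {α : Type*} (f : α → ENNReal) (k : ℕ) :
    ∑' q : Fin k → α, ∏ i, f (q i) = (∑' a, f a) ^ k := by
  induction k with
  | zero => simp
  | succ k ih =>
    rw [← (Fin.consEquiv fun _ ↦ α).tsum_eq, ENNReal.tsum_prod', pow_succ', ← ih,
      ← ENNReal.tsum_mul_right]
    refine tsum_congr fun a ↦ ?_
    rw [← ENNReal.tsum_mul_left]
    refine tsum_congr fun q ↦ ?_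
    simp [Fin.consEquiv, Fin.prod_univ_succ]

theorem summable_inv_max_one_abs_sq : Summable fun k : ℤ ↦ (max 1 |(k : ℝ)| ^ 2)⁻¹ := by
  refine (Real.summable_one_div_int_pow.mpr one_lt_two).of_norm_bounded_eventually ?_
  filter_upwards [eventually_cofinite_ne 0] with k hk
  have : (1 : ℝ) ≤ |(k : ℝ)| := by exact_mod_cast Int.one_le_abs hk
  simp [max_eq_right this]

section Pi

variable (ι κ α : Type*) [Fintype ι] [Fintype κ] [MeasureSpace α]
  [SigmaFinite (volume : Measure α)]

theorem volume_measurePreserving_curry_symm :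
    MeasurePreserving (MeasurableEquiv.curry ι κ α).symm volume volume := by
  refine ⟨(MeasurableEquiv.curry ι κ α).symm.measurable, (Measure.pi_eq fun s _ ↦ ?_).symm⟩
  rw [MeasurableEquiv.map_apply]
  have : (MeasurableEquiv.curry ι κ α).symm ⁻¹' Set.univ.pi s =
      Set.univ.pi fun i ↦ Set.univ.pi fun j ↦ s (i, j) := by
    ext; simp [MeasurableEquiv.coe_curry_symm]
  simp only [this, volume_pi_pi, Fintype.prod_prod_type]

theorem volume_measurePreserving_swap :
    MeasurePreserving (Function.swap : (ι → κ → α) → κ → ι → α) volume volume := by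
  convert (volume_measurePreserving_curry_symm κ ι α).symm.comp
    ((volume_measurePreserving_piCongrLeft (fun _ ↦ α) (Equiv.prodComm ι κ)).comp
      (volume_measurePreserving_curry_symm ι κ α))
  ext f j i
  simp only [Function.swap, Function.comp_apply, MeasurableEquiv.symm_symm,
    MeasurableEquiv.coe_curry, MeasurableEquiv.coe_curry_symm, Function.curry_apply,
    MeasurableEquiv.coe_piCongrLeft]
  exact (Equiv.piCongrLeft_apply_apply (fun _ ↦ α) (Equiv.prodComm ι κ) (Function.uncurry f)
    (i, j)).symm

end Pi

section Slabs

variable {N : ℕ}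

theorem volume_closedBall_inter_slab_le (w : Fin N → ℝ) {i₀ : Fin N} (hw : w i₀ ≠ 0)
    (t ε R : ℝ) :
    volume (closedBall (0 : Fin N → ℝ) R ∩ {a | |w ⬝ᵥ a - t| < ε}) ≤
      ENNReal.ofReal |w i₀|⁻¹ * (ENNReal.ofReal (2 * ε) * ENNReal.ofReal (2 * R) ^ (N - 1)) := by
  classical
  set L := Matrix.toLin' ((1 : Matrix (Fin N) (Fin N) ℝ).updateRow i₀ w)
  have hL : ∀ a, L a = Function.update a i₀ (w ⬝ᵥ a) := fun a ↦ by
    simp [L, Matrix.updateRow_mulVec]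
  have hdet : LinearMap.det L = w i₀ := by
    simp [L, LinearMap.det_toLin', Matrix.det_updateRow_one]
  set T : Set (Fin N → ℝ) :=
    Set.univ.pi (Function.update (fun _ ↦ closedBall 0 R) i₀ (ball t ε))
  have hsub : closedBall (0 : Fin N → ℝ) R ∩ {a | |w ⬝ᵥ a - t| < ε} ⊆ L ⁻¹' T := by
    rintro a ⟨ha, hslab⟩ i -
    rw [hL]
    rcases eq_or_ne i i₀ with rfl | hi
    · simpa [T, Real.dist_eq] using hslab
    · simp only [Function.update_of_ne hi]
      exact (dist_le_pi_dist a 0 i).trans ha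
  have hT : volume T = ENNReal.ofReal (2 * ε) * ENNReal.ofReal (2 * R) ^ (N - 1) := by
    rw [volume_pi_pi, ← Finset.mul_prod_erase _ _ (Finset.mem_univ i₀),
      Finset.prod_congr rfl fun i hi ↦ by rw [Function.update_of_ne (Finset.ne_of_mem_erase hi)]]
    simp [Real.volume_closedBall, Real.volume_ball, Finset.card_erase_of_mem]
  calc _ ≤ volume (L ⁻¹' T) := measure_mono hsub
    _ = _ := by rw [Measure.addHaar_preimage_linearMap _ (by rwa [hdet]), hdet, hT, abs_inv]

theorem abs_intCast_le_of_mem_closedBall_inter_slab {w a : Fin N → ℝ} {m : ℤ} {R ε : ℝ}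
    (ha : a ∈ closedBall (0 : Fin N → ℝ) R) (hε : ε ≤ 1) (hm : |w ⬝ᵥ a - m| < ε) :
    |(m : ℝ)| ≤ N * R * ‖w‖ + 1 := by
  have hwa : |w ⬝ᵥ a| ≤ N * R * ‖w‖ := by
    calc |w ⬝ᵥ a| ≤ N * ‖w‖ * ‖a‖ := by simpa using abs_dotProduct_le w a
      _ ≤ N * ‖w‖ * R := by gcongr; exact mem_closedBall_zero_iff.mp ha
      _ = N * R * ‖w‖ := by ring
  linarith [abs_sub_abs_le_abs_sub (m : ℝ) (w ⬝ᵥ a), abs_sub_comm (m : ℝ) (w ⬝ᵥ a)]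

theorem tsum_volume_closedBall_inter_slab_le (w : Fin N → ℝ) {i₀ : Fin N}
    (hi₀ : 1 ≤ |w i₀|) {R ε : ℝ} (hR : 0 ≤ R) (hε : ε ≤ 1) :
    ∑' m : ℤ, volume (closedBall (0 : Fin N → ℝ) R ∩ {a | |w ⬝ᵥ a - m| < ε}) ≤
      ENNReal.ofReal ((2 * N * R + 5) * ‖w‖ * (2 * ε)) * ENNReal.ofReal (2 * R) ^ (N - 1) := by
  set M : ℕ := ⌈N * R * ‖w‖⌉₊ + 1
  have hM_ge : N * R * ‖w‖ + 1 ≤ (M : ℝ) := by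
    push_cast [M]; linarith [Nat.le_ceil (N * R * ‖w‖)]
  have hM_lt : (M : ℝ) < N * R * ‖w‖ + 2 := by
    push_cast [M]; linarith [Nat.ceil_lt_add_one (by positivity : (0 : ℝ) ≤ N * R * ‖w‖)]
  have hw : 1 ≤ ‖w‖ := hi₀.trans (norm_le_pi_norm w i₀)
  have hcard : ((Finset.Icc (-(M : ℤ)) M).card : ℝ) ≤ (2 * N * R + 5) * ‖w‖ := by
    have : (Finset.Icc (-(M : ℤ)) M).card = 2 * M + 1 := by rw [Int.card_Icc]; omega
    rw [this]; push_cast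
    nlinarith [(by positivity : (0 : ℝ) ≤ 2 * N * R)]
  have hempty : ∀ m ∉ Finset.Icc (-(M : ℤ)) M,
      volume (closedBall (0 : Fin N → ℝ) R ∩ {a | |w ⬝ᵥ a - m| < ε}) = 0 := by
    intro m hm
    refine measure_mono_null (fun a ha ↦ hm ?_) measure_empty
    have := abs_intCast_le_of_mem_closedBall_inter_slab ha.1 hε ha.2
    rw [Finset.mem_Icc, ← abs_le]
    exact_mod_cast (show ((|m| : ℤ) : ℝ) ≤ M by push_cast; linarith)
  rw [tsum_eq_sum hempty]
  calc _ ≤ (Finset.Icc (-(M : ℤ)) M).card • (ENNReal.ofReal |w i₀|⁻¹ *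
        (ENNReal.ofReal (2 * ε) * ENNReal.ofReal (2 * R) ^ (N - 1))) :=
        Finset.sum_le_card_nsmul _ _ _ fun m _ ↦
          volume_closedBall_inter_slab_le w (abs_pos.mp (by linarith)) _ _ _
    _ ≤ _ := by
        rw [nsmul_eq_mul, ← mul_assoc,
          ENNReal.ofReal_mul (p := (2 * N * R + 5) * ‖w‖) (by positivity), ← mul_assoc]
        gcongr ?_ * _ * _
        rw [← ENNReal.ofReal_natCast, ← ENNReal.ofReal_mul (by positivity)]
        refine ENNReal.ofReal_le_ofReal ?_
        calc _ ≤ ((Finset.Icc (-(M : ℤ)) M).card : ℝ) * 1 := by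
              gcongr
              exact inv_le_one_of_one_le₀ hi₀
          _ ≤ _ := by rw [mul_one]; exact hcard

theorem norm_mul_sqrt_sum_sq_rpow_neg_le (w : Fin N → ℝ) (hw : 1 ≤ ‖w‖) {δ : ℝ}
    (hδ : 2 * N + 1 ≤ δ) :
    ‖w‖ * √(∑ i, w i ^ 2) ^ (-δ) ≤ ∏ i, (max 1 |w i| ^ 2)⁻¹ := by
  have hw₀ : 0 < ‖w‖ := by linarith
  calc ‖w‖ * √(∑ i, w i ^ 2) ^ (-δ) ≤ ‖w‖ * ‖w‖ ^ (-δ) :=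
        mul_le_mul_of_nonneg_left
          (Real.rpow_le_rpow_of_nonpos hw₀ (norm_le_sqrt_sum_sq w) (by linarith)) hw₀.le
    _ = ‖w‖ ^ (1 - δ) := by rw [sub_eq_add_neg, Real.rpow_add hw₀, Real.rpow_one]
    _ ≤ ‖w‖ ^ (-((2 * N : ℕ) : ℝ)) := Real.rpow_le_rpow_of_exponent_le hw (by push_cast; linarith)
    _ = ∏ _i : Fin N, (‖w‖ ^ 2)⁻¹ := by
        rw [Real.rpow_neg hw₀.le, Real.rpow_natCast, Finset.prod_const, Finset.card_univ,
          Fintype.card_fin, inv_pow, ← pow_mul]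
    _ ≤ ∏ i, (max 1 |w i| ^ 2)⁻¹ := by
        gcongr with i
        exact max_le hw (norm_le_pi_norm w i)

theorem tsum_volume_closedBall_inter_slab_le_prod {q : Fin N → ℤ} (hq : q ≠ 0)
    {R δ c : ℝ} (hR : 0 ≤ R) (hδ : 2 * N + 1 ≤ δ) (hc₀ : 0 ≤ c) (hc₁ : c ≤ 1) :
    ∑' m : ℤ, volume (closedBall (0 : Fin N → ℝ) R ∩
        {a | |(fun i ↦ (q i : ℝ)) ⬝ᵥ a - m| < c * √(∑ i, (q i : ℝ) ^ 2) ^ (-δ)}) ≤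
      ENNReal.ofReal c * ENNReal.ofReal (2 * (2 * N * R + 5)) * ENNReal.ofReal (2 * R) ^ (N - 1) *
        ∏ i, ENNReal.ofReal (max 1 |(q i : ℝ)| ^ 2)⁻¹ := by
  set w : Fin N → ℝ := fun i ↦ (q i : ℝ)
  obtain ⟨i₀, hi₀⟩ := Function.ne_iff.mp hq
  have hw₀ : 1 ≤ |w i₀| := by simpa [w] using (Int.cast_le (R := ℝ)).mpr (Int.one_le_abs hi₀)
  have hw : 1 ≤ ‖w‖ := hw₀.trans (norm_le_pi_norm w i₀)
  have hE : 1 ≤ √(∑ i, w i ^ 2) := hw.trans (norm_le_sqrt_sum_sq w)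
  have hε : c * √(∑ i, w i ^ 2) ^ (-δ) ≤ 1 :=
    mul_le_one₀ hc₁ (by positivity) (Real.rpow_le_one_of_one_le_of_nonpos hE (by linarith))
  refine (tsum_volume_closedBall_inter_slab_le w hw₀ hR hε).trans ?_
  rw [← ENNReal.ofReal_prod_of_nonneg fun _ _ ↦ by positivity, mul_right_comm _ (_ ^ _),
    ← ENNReal.ofReal_mul hc₀, ← ENNReal.ofReal_mul (by positivity)]
  gcongr ENNReal.ofReal ?_ * _
  have := norm_mul_sqrt_sum_sq_rpow_neg_le w hw hδ
  calc (2 * N * R + 5) * ‖w‖ * (2 * (c * √(∑ i, w i ^ 2) ^ (-δ)))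
      = c * (2 * (2 * N * R + 5)) * (‖w‖ * √(∑ i, w i ^ 2) ^ (-δ)) := by ring
    _ ≤ _ := by gcongr

theorem volume_closedBall_inter_not_isDeltaDiophantine_le {R δ c : ℝ} (hR : 0 ≤ R)
    (hδ : 2 * N + 1 ≤ δ) (hc₀ : 0 < c) (hc₁ : c ≤ 1) :
    volume (closedBall (0 : Fin N → ℝ) R ∩ {a | ¬ IsDeltaDiophantine δ a}) ≤
      ENNReal.ofReal c * (ENNReal.ofReal (2 * (2 * N * R + 5)) * ENNReal.ofReal (2 * R) ^ (N - 1) *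
        (∑' k : ℤ, ENNReal.ofReal (max 1 |(k : ℝ)| ^ 2)⁻¹) ^ N) := by
  have hcover : closedBall (0 : Fin N → ℝ) R ∩ {a | ¬ IsDeltaDiophantine δ a} ⊆
      ⋃ (q : Fin N → ℤ) (_ : q ≠ 0) (m : ℤ), closedBall (0 : Fin N → ℝ) R ∩
        {a | |(fun i ↦ (q i : ℝ)) ⬝ᵥ a - m| < c * √(∑ i, (q i : ℝ) ^ 2) ^ (-δ)} := by
    rintro a ⟨ha, hbad⟩
    simp only [Set.mem_ofPred_eq, IsDeltaDiophantine, not_exists, not_and, not_forall,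
      not_le] at hbad
    obtain ⟨q, hq, m, hm⟩ := hbad c hc₀
    simp only [Set.mem_iUnion]
    exact ⟨q, hq, m, ha, hm⟩
  rw [← ENNReal.tsum_fin_pi_prod, ← mul_assoc, ← mul_assoc, ← ENNReal.tsum_mul_left]
  refine (measure_mono hcover).trans <| (measure_iUnion_le _).trans <|
    ENNReal.tsum_le_tsum fun q ↦ ?_
  rcases eq_or_ne q 0 with rfl | hq
  · simp
  · simpa [hq] using (measure_iUnion_le _).trans
      (tsum_volume_closedBall_inter_slab_le_prod hq hR hδ hc₀.le hc₁)

theorem volume_closedBall_inter_not_isDeltaDiophantine {R δ : ℝ} (hR : 0 ≤ R)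
    (hδ : 2 * N + 1 ≤ δ) :
    volume (closedBall (0 : Fin N → ℝ) R ∩ {a | ¬ IsDeltaDiophantine δ a}) = 0 := by
  set K := ENNReal.ofReal (2 * (2 * N * R + 5)) * ENNReal.ofReal (2 * R) ^ (N - 1) *
    (∑' k : ℤ, ENNReal.ofReal (max 1 |(k : ℝ)| ^ 2)⁻¹) ^ N
  have hK : K ≠ ⊤ := by
    have : ∑' k : ℤ, ENNReal.ofReal (max 1 |(k : ℝ)| ^ 2)⁻¹ ≠ ⊤ := by
      rw [← ENNReal.ofReal_tsum_of_nonneg (fun _ ↦ by positivity) summable_inv_max_one_abs_sq]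
      exact ENNReal.ofReal_ne_top
    exact ENNReal.mul_ne_top (ENNReal.mul_ne_top ENNReal.ofReal_ne_top
      (ENNReal.pow_ne_top ENNReal.ofReal_ne_top)) (ENNReal.pow_ne_top this)
  have hlim : Tendsto (fun c : ℝ ↦ ENNReal.ofReal c * K) (𝓝[>] 0) (𝓝 0) := by
    simpa using ENNReal.Tendsto.mul_const (ENNReal.tendsto_ofReal
      (tendsto_nhdsWithin_of_tendsto_nhds (a := (0 : ℝ)) tendsto_id)) (Or.inr hK)
  refine le_antisymm (ge_of_tendsto hlim ?_) bot_le
  filter_upwards [Ioc_mem_nhdsGT one_pos] with c hc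
  exact volume_closedBall_inter_not_isDeltaDiophantine_le hR hδ hc.1 hc.2

theorem ae_isDeltaDiophantine {δ : ℝ} (hδ : 2 * N + 1 ≤ δ) :
    ∀ᵐ a : Fin N → ℝ, IsDeltaDiophantine δ a := by
  rw [ae_iff]
  refine measure_mono_null (fun a ha ↦ ?_) <| measure_iUnion_null fun R : ℕ ↦
    volume_closedBall_inter_not_isDeltaDiophantine R.cast_nonneg hδ
  obtain ⟨R, hR⟩ := exists_nat_ge ‖a‖
  exact Set.mem_iUnion.mpr ⟨R, mem_closedBall_zero_iff.mpr hR, ha⟩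

theorem ae_isDiophantineVector : ∀ᵐ a : Fin N → ℝ, IsDiophantineVector a :=
  (ae_isDeltaDiophantine le_rfl).mono fun _ h ↦ ⟨_, by positivity, h⟩

end Slabs

theorem IsDiophantineMatrix.of_isDiophantineVector_col {n : ℕ} {Θ : Fin n → Fin n → ℝ}
    {j : Fin n} (h : IsDiophantineVector fun i ↦ Θ i j) : IsDiophantineMatrix Θ :=
  ⟨Pi.single j 1, by simpa [Pi.single_apply] using h⟩

theorem ae_isDiophantineMatrix (n : ℕ) (hn : 1 ≤ n) :
    MeasureTheory.volume {Θ : Fin n → Fin n → ℝ | ¬ IsDiophantineMatrix Θ} = 0 := by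
  rw [← ae_iff]
  have hcol : ∀ᵐ Θ : Fin n → Fin n → ℝ, IsDiophantineVector fun i ↦ Θ i ⟨0, hn⟩ :=
    (volume_measurePreserving_swap (Fin n) (Fin n) ℝ).quasiMeasurePreserving.ae
      (Measure.tendsto_eval_ae_ae.eventually ae_isDiophantineVector)
  exact hcol.mono fun _ ↦ IsDiophantineMatrix.of_isDiophantineVector_col
end
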